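/- Let V be a finite set, f, g : V → V, and v* ∈ V with ℓ_f(v*) ≥ 2. Then: (a) there is no expanding w ∈ V* with v* ∈ {L(w), R(w)}; (b) for every u ∈ V* with u ≠ v*, there is exactly one expanding w ∈ V* with u ∈ {L(w), R(w)}; and (c) every expanding u ∈ V* satisfies L(u) ≠ R(u). (Hence the directed graph on V* with an edge from each expanding u to L(u) and to R(u) is a binary tree rooted at v*.) -/

import Mathlib

/-- An element `v` is a *Nephew solution* for `(f, g)` if
`f (f (g v)) ≠ f v` or `f (g v) = v`. -/
def NephewSol {V : Type*} (f g : V → V) (v : V) : Prop :=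
  f (f (g v)) ≠ f v ∨ f (g v) = v

/-- `w` is a periodic point of `f`: some positive iterate of `f` fixes `w`. -/
def NephewPeriodic {V : Type*} (f : V → V) (w : V) : Prop :=
  ∃ k : ℕ, 1 ≤ k ∧ f^[k] w = w

/-- The *level* of `v`: the least `k ≥ 0` such that `f^[k] v` is a periodic point. -/
noncomputable def level {V : Type*} (f : V → V) (v : V) : ℕ :=
  sInf {k : ℕ | NephewPeriodic f (f^[k] v)}

/-- `u` *expands* if none of `u`, `g u`, `f (g u)`, `g (f (g u))` is a Nephew solution;
its children are then `L u = g u` and `R u = g (f (g u))`. -/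
def Expands {V : Type*} (f g : V → V) (u : V) : Prop :=
  ¬ NephewSol f g u ∧ ¬ NephewSol f g (g u) ∧
  ¬ NephewSol f g (f (g u)) ∧ ¬ NephewSol f g (g (f (g u)))

/-- `V*`: the smallest subset of `V` containing `v*` and closed under taking the
children `g u` and `g (f (g u))` of every expanding `u`. -/
inductive InVStar {V : Type*} (f g : V → V) (vstar : V) : V → Prop
  | base : InVStar f g vstar vstar
  | left {u : V} : InVStar f g vstar u → Expands f g u → InVStar f g vstar (g u)
  | right {u : V} : InVStar f g vstar u → Expands f g u → InVStar f g vstar (g (f (g u)))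

/-!
A child `c` of `p` (that is, `c = g p` or `c = g (f (g p))` with `p` expanding) satisfies
`f (f c) = f p`. As `f` lowers the level by one, every child in `V*` lies one level above its
parent, so the root `v*` has the least level in `V*` and is nobody's child. Moreover `f` is
injective on `V*`: two points of `V*` with the same image have parents with the same image,
hence (inductively) the same parent, and the two children of one parent have distinct images.
Uniqueness of parents follows, since the parent `p` of `u` is determined by `f p = f (f u)`.
-/

theorem NephewPeriodic.iterate {V : Type*} {f : V → V} {w : V} (h : NephewPeriodic f w)
    (n : ℕ) : NephewPeriodic f (f^[n] w) :=
  let ⟨k, hk, hw⟩ := h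
  ⟨k, hk, Function.IsPeriodicPt.apply_iterate hw n⟩

theorem exists_nephewPeriodic_iterate {V : Type*} [Finite V] (f : V → V) (x : V) :
    ∃ k, NephewPeriodic f (f^[k] x) := by
  obtain ⟨m, n, hmn, h⟩ := Finite.exists_ne_map_eq_of_infinite (f^[·] x)
  wlog hlt : m < n generalizing m n
  · exact this n m hmn.symm h.symm (by omega)
  refine ⟨m, n - m, by omega, ?_⟩
  rw [← Function.iterate_add_apply, Nat.sub_add_cancel hlt.le]
  exact h.symm

section Level

variable {V : Type*} [Finite V] (f : V → V)

theorem level_le_iff {x : V} {k : ℕ} : level f x ≤ k ↔ NephewPeriodic f (f^[k] x) := by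
  refine ⟨fun h => ?_, fun h => Nat.sInf_le h⟩
  have hx : NephewPeriodic f (f^[level f x] x) := Nat.sInf_mem (exists_nephewPeriodic_iterate f x)
  have := hx.iterate (k - level f x)
  rwa [← Function.iterate_add_apply, Nat.sub_add_cancel h] at this

theorem level_iterate (n : ℕ) (x : V) : level f (f^[n] x) = level f x - n :=
  eq_of_forall_ge_iff fun k => by
    rw [level_le_iff, ← Function.iterate_add_apply, ← level_le_iff, tsub_le_iff_right]

theorem level_apply (x : V) : level f (f x) = level f x - 1 :=
  level_iterate f 1 x

theorem level_eq_add_one_of_apply_apply_eq {c p : V} (h : f (f c) = f p)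
    (hp : 2 ≤ level f p) : level f c = level f p + 1 := by
  have hc : level f (f (f c)) = level f c - 2 := level_iterate f 2 c
  rw [h, level_apply] at hc
  omega

end Level

section Children

variable {V : Type*} {f g : V → V} {p c c' : V}

theorem not_nephewSol_iff {v : V} : ¬ NephewSol f g v ↔ f (f (g v)) = f v ∧ f (g v) ≠ v := by
  rw [NephewSol, not_or, not_not]

variable (f g) in
def IsChild (p c : V) : Prop :=
  Expands f g p ∧ (c = g p ∨ c = g (f (g p)))

theorem Expands.apply_ne (he : Expands f g p) : f (g (f (g p))) ≠ f (g p) :=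
  (not_nephewSol_iff.1 he.2.2.1).2

theorem Expands.left_ne_right (he : Expands f g p) : g p ≠ g (f (g p)) :=
  fun h => he.apply_ne (congrArg f h).symm

theorem IsChild.apply_apply (h : IsChild f g p c) : f (f c) = f p := by
  obtain ⟨he, rfl | rfl⟩ := h
  · exact (not_nephewSol_iff.1 he.1).1
  · rw [(not_nephewSol_iff.1 he.2.2.1).1, (not_nephewSol_iff.1 he.1).1]

theorem IsChild.eq_of_apply_eq (hc : IsChild f g p c) (hc' : IsChild f g p c')
    (h : f c = f c') : c = c' := by
  obtain ⟨he, rfl | rfl⟩ := hc <;> obtain ⟨-, rfl | rfl⟩ := hc'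
  · rfl
  · exact absurd h.symm he.apply_ne
  · exact absurd h he.apply_ne
  · rfl

end Children

namespace InVStar

variable {V : Type*} {f g : V → V} {vstar p c u : V}

@[elab_as_elim]
theorem induction_on_child {P : V → Prop} (base : P vstar)
    (child : ∀ ⦃p c⦄, InVStar f g vstar p → IsChild f g p c → P p → P c)
    (h : InVStar f g vstar u) : P u := by
  induction h with
  | base => exact base
  | left hp he ih => exact child hp ⟨he, .inl rfl⟩ ih
  | right hp he ih => exact child hp ⟨he, .inr rfl⟩ ih

theorem eq_or_isChild (h : InVStar f g vstar u) :
    u = vstar ∨ ∃ p, InVStar f g vstar p ∧ IsChild f g p u :=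
  h.induction_on_child (.inl rfl) fun p _ hp hc _ => .inr ⟨p, hp, hc⟩

variable [Finite V] (hv : 2 ≤ level f vstar)
include hv

theorem level_le (h : InVStar f g vstar u) : level f vstar ≤ level f u :=
  h.induction_on_child le_rfl fun _ _ _ hc ih => by
    rw [level_eq_add_one_of_apply_apply_eq f hc.apply_apply (hv.trans ih)]
    omega

theorem level_lt_of_isChild (hp : InVStar f g vstar p) (hc : IsChild f g p c) :
    level f vstar < level f c := by
  rw [level_eq_add_one_of_apply_apply_eq f hc.apply_apply (hv.trans (hp.level_le hv))]
  exact Nat.lt_succ_of_le (hp.level_le hv)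

theorem apply_ne_apply_root_of_isChild (hp : InVStar f g vstar p) (hc : IsChild f g p c) :
    f c ≠ f vstar := fun h => by
  have hlt := hp.level_lt_of_isChild hv hc
  have hlev := congrArg (level f) h
  rw [level_apply, level_apply] at hlev
  omega

theorem injOn : Set.InjOn f {u | InVStar f g vstar u} := by
  suffices ∀ w, InVStar f g vstar w → ∀ w', InVStar f g vstar w' → f w = f w' → w = w' from
    fun w hw w' hw' => this w hw w' hw'
  refine fun w hw => hw.induction_on_child ?_ ?_
  · intro w' hw' h
    rcases hw'.eq_or_isChild with rfl | ⟨p', hp', hc'⟩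
    · rfl
    · exact absurd h.symm (hp'.apply_ne_apply_root_of_isChild hv hc')
  · intro p c hp hc ih w' hw' h
    rcases hw'.eq_or_isChild with rfl | ⟨p', hp', hc'⟩
    · exact absurd h (hp.apply_ne_apply_root_of_isChild hv hc)
    · obtain rfl : p = p' := ih p' hp' (by rw [← hc.apply_apply, ← hc'.apply_apply, h])
      exact hc.eq_of_apply_eq hc' h

end InVStar

/-- If `ℓ_f(v*) ≥ 2`, then the induced graph on `V*` is a binary tree rooted at `v*`:
(a) `v*` is not a child of any expanding `w ∈ V*`; (b) every `u ∈ V*` other than `v*`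
is a child of exactly one expanding `w ∈ V*`; and (c) every expanding `u ∈ V*` has
two distinct children. -/
theorem VStar_is_tree {V : Type*} [Finite V] (f g : V → V) (vstar : V)
    (hv : 2 ≤ level f vstar) :
    (¬ ∃ w : V, InVStar f g vstar w ∧ Expands f g w ∧
        (vstar = g w ∨ vstar = g (f (g w)))) ∧
    (∀ u : V, InVStar f g vstar u → u ≠ vstar →
      ∃! w : V, InVStar f g vstar w ∧ Expands f g w ∧
        (u = g w ∨ u = g (f (g w)))) ∧
    (∀ u : V, InVStar f g vstar u → Expands f g u → g u ≠ g (f (g u))) := by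
  refine ⟨fun ⟨w, hw, hc⟩ => (hw.level_lt_of_isChild hv hc).false,
    fun u hu hne => ?_, fun u _ he => he.left_ne_right⟩
  obtain ⟨p, hp, hc⟩ := hu.eq_or_isChild.resolve_left hne
  refine ⟨p, ⟨hp, hc⟩, fun w ⟨hw, hc'⟩ => InVStar.injOn hv hw hp ?_⟩
  rw [← hc.apply_apply, ← IsChild.apply_apply hc']
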